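/- arXiv:math/9411221 — 2 statements merged into one kernel-verified Lean document; each statement's English description precedes it below -/
import Mathlib

section
/- Let G be a finite group and S = {s₁,…,s_k} ⊆ G ∖ {e} a generating set of G such that the subgroups ⟨s₁,…,s_i⟩, 1 ≤ i ≤ k, are pairwise distinct (i.e., the Cayley digraph Cay(G,S) is hierarchical and connected). Then κ(Cay(G,S)) = |S|. -/
open Classical

/-- A digraph (given by its edge relation `E`) is strongly connected iff for every
ordered pair of vertices there is a directed path from the first to the second. -/
def SC {V : Type*} (E : V → V → Prop) : Prop :=
  ∀ a b : V, Relation.ReflTransGen E a b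

/-- The subdigraph induced on `A` is strongly connected. -/
def SCOn {V : Type*} (E : V → V → Prop) (A : Set V) : Prop :=
  ∀ a ∈ A, ∀ b ∈ A, Relation.ReflTransGen (fun x y => x ∈ A ∧ y ∈ A ∧ E x y) a b

/-- Out-neighborhood of a set of vertices. -/
def Nout {V : Type*} (E : V → V → Prop) (A : Set V) : Set V :=
  {x | x ∉ A ∧ ∃ y ∈ A, E y x}

/-- Vertex connectivity: the least cardinality of a set `T` of vertices whose removal
leaves a non-strongly-connected digraph; `Nat.card V - 1` if no such `T` exists. -/
noncomputable def kappa {V : Type*} [Finite V] (E : V → V → Prop) : ℕ :=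
  if ∃ T : Set V, ¬ SCOn E Tᶜ then
    sInf {m | ∃ T : Set V, T.ncard = m ∧ ¬ SCOn E Tᶜ}
  else Nat.card V - 1

/-- A part of a digraph. -/
def IsPart {V : Type*} (E : V → V → Prop) (A : Set V) : Prop :=
  A.Nonempty ∧ ((A ∪ Nout E A)ᶜ : Set V).Nonempty

/-- An atom: a part with `|N(A)| = κ` of minimum cardinality among such parts. -/
def IsAtomD {V : Type*} [Finite V] (E : V → V → Prop) (A : Set V) : Prop :=
  IsPart E A ∧ (Nout E A).ncard = kappa E ∧
    ∀ B : Set V, IsPart E B → (Nout E B).ncard = kappa E → A.ncard ≤ B.ncard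

/-- Edge relation of the Cayley digraph `Cay(G,S)`: an edge from `g₁` to `g₂` iff
`g₁⁻¹g₂ ∈ S`. -/
def cayRel {G : Type*} [Group G] (S : Set G) : G → G → Prop :=
  fun x y => x⁻¹ * y ∈ S

/-!
Removing the out-neighbourhood `S` of `1` disconnects `Cay(G,S)` unless the digraph is complete,
so `κ ≤ |S|`. For the converse take an atom: a fragment (a part whose out-neighbourhood is a
minimum cut) of least size among the fragments of the digraph and of its reverse. An atom meets
a fragment only by being contained in it, so an atom through `1` is stable under left
multiplication by its own elements, i.e. it is a proper subgroup `H`, and `κ = |HS \ H|`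
(or `|HS⁻¹ \ H|` for an atom of the reverse digraph `Cay(G,S⁻¹)`, whose generating sequence is
again hierarchical). Finally `|HS \ H| ≥ k` for every proper subgroup `H` when `S` is given by a
hierarchical generating sequence of length `k`.
-/

open Pointwise

section Digraph

variable {V : Type*} {E : V → V → Prop} {A B F T : Set V}

def far (E : V → V → Prop) (A : Set V) : Set V := (A ∪ Nout E A)ᶜ

def IsFragment [Finite V] (E : V → V → Prop) (A : Set V) : Prop :=
  IsPart E A ∧ (Nout E A).ncard = kappa E

theorem not_SCOn_compl_Nout (hA : IsPart E A) : ¬ SCOn E (Nout E A)ᶜ := by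
  obtain ⟨⟨a, ha⟩, ⟨c, hc⟩⟩ := hA
  intro hsc
  have hstay : ∀ z, Relation.ReflTransGen
      (fun x y => x ∈ (Nout E A)ᶜ ∧ y ∈ (Nout E A)ᶜ ∧ E x y) a z → z ∈ A := by
    intro z hz
    induction hz with
    | refl => exact ha
    | tail _ e ih => exact by_contra fun hz => e.2.1 ⟨hz, _, ih, e.2.2⟩
  exact hc (Or.inl (hstay c (hsc a (fun h => h.1 ha) c (fun h => hc (Or.inr h)))))

theorem exists_isPart_Nout_subset (h : ¬ SCOn E Tᶜ) : ∃ B, IsPart E B ∧ Nout E B ⊆ T := by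
  simp only [SCOn, not_forall] at h
  obtain ⟨a, ha, b, hb, hab⟩ := h
  set B : Set V := {x | x ∈ Tᶜ ∧ Relation.ReflTransGen
    (fun x y => x ∈ Tᶜ ∧ y ∈ Tᶜ ∧ E x y) a x}
  have hNout : Nout E B ⊆ T := by
    rintro y ⟨hyB, x, hxB, hxy⟩
    by_contra hyT
    exact hyB ⟨hyT, hxB.2.tail ⟨hxB.1, hyT, hxy⟩⟩
  refine ⟨B, ⟨⟨a, ha, .refl⟩, b, ?_⟩, hNout⟩
  rintro (hbB | hbN)
  · exact hab hbB.2
  · exact hb (hNout hbN)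

theorem kappa_le_ncard_Nout [Finite V] (hA : IsPart E A) : kappa E ≤ (Nout E A).ncard := by
  rw [kappa, if_pos ⟨_, not_SCOn_compl_Nout hA⟩]
  exact Nat.sInf_le ⟨_, rfl, not_SCOn_compl_Nout hA⟩

theorem exists_isFragment [Finite V] (h : ∃ T : Set V, ¬ SCOn E Tᶜ) : ∃ A, IsFragment E A := by
  obtain ⟨T₀, hT₀⟩ := h
  obtain ⟨T, hT, hTcut⟩ := Nat.sInf_mem (s := {m | ∃ T : Set V, T.ncard = m ∧ ¬ SCOn E Tᶜ})
    ⟨_, T₀, rfl, hT₀⟩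
  obtain ⟨A, hA, hAT⟩ := exists_isPart_Nout_subset hTcut
  refine ⟨A, hA, le_antisymm ?_ (kappa_le_ncard_Nout hA)⟩
  rw [kappa, if_pos ⟨T₀, hT₀⟩, ← hT]
  exact Set.ncard_le_ncard hAT

theorem kappa_eq_of_forall_ne [Finite V] (hE : ∀ x y, x ≠ y → E x y) :
    kappa E = Nat.card V - 1 := by
  rw [kappa, if_neg]
  rintro ⟨T, hT⟩
  refine hT fun a ha b hb => ?_
  by_cases hab : a = b
  · exact hab ▸ .refl
  · exact .single ⟨ha, hb, hE a b hab⟩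

theorem SCOn.swap (h : SCOn E A) : SCOn (Function.swap E) A := fun a ha b hb =>
  Relation.ReflTransGen.mono (fun _ _ hxy => ⟨hxy.2.1, hxy.1, hxy.2.2⟩) _ _ (h b hb a ha).swap

theorem SCOn_swap_iff : SCOn (Function.swap E) A ↔ SCOn E A :=
  ⟨SCOn.swap, SCOn.swap⟩

theorem kappa_swap [Finite V] : kappa (Function.swap E) = kappa E := by
  simp only [kappa, SCOn_swap_iff]

theorem far_anti (h : A ⊆ B) : far E B ⊆ far E A := by
  rintro x hx (hxA | ⟨hxA, y, hyA, hyx⟩)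
  · exact hx (Or.inl (h hxA))
  · exact hx (Or.inr ⟨fun hxB => hx (Or.inl hxB), y, h hyA, hyx⟩)

theorem far_inter_far_subset_far_union : far E A ∩ far E F ⊆ far E (A ∪ F) := by
  rintro x ⟨hxA, hxF⟩ (hx | ⟨hx, y, hy, hyx⟩)
  · exact hx.elim (fun h => hxA (Or.inl h)) (fun h => hxF (Or.inl h))
  · rcases hy with hy | hy
    · exact hxA (Or.inr ⟨fun h => hx (Or.inl h), y, hy, hyx⟩)
    · exact hxF (Or.inr ⟨fun h => hx (Or.inr h), y, hy, hyx⟩)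

theorem Nout_swap_far_subset : Nout (Function.swap E) (far E B) ⊆ Nout E B := by
  rintro x ⟨hx, y, hy, hxy⟩
  have hxB : x ∉ B := fun hxB => hy (Or.inr ⟨fun hyB => hy (Or.inl hyB), x, hxB, hxy⟩)
  exact (not_not.1 hx).resolve_left hxB

theorem subset_far_swap_far : B ⊆ far (Function.swap E) (far E B) := by
  rintro x hxB (hx | hx)
  · exact hx (Or.inl hxB)
  · exact (Nout_swap_far_subset hx).1 hxB

theorem IsFragment.swap_far [Finite V] (hB : IsFragment E B) :
    IsFragment (Function.swap E) (far E B) := by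
  obtain ⟨⟨hBne, hfar⟩, hcard⟩ := hB
  have hpart : IsPart (Function.swap E) (far E B) := ⟨hfar, hBne.mono subset_far_swap_far⟩
  refine ⟨hpart, le_antisymm ?_ (kappa_le_ncard_Nout hpart)⟩
  rw [kappa_swap, ← hcard]
  exact Set.ncard_le_ncard Nout_swap_far_subset

theorem ncard_Nout_inter_add_ncard_Nout_union_le [Finite V] (A F : Set V) :
    (Nout E (A ∩ F)).ncard + (Nout E (A ∪ F)).ncard ≤ (Nout E A).ncard + (Nout E F).ncard := by
  have hunion : Nout E (A ∩ F) ∪ Nout E (A ∪ F) ⊆ Nout E A ∪ Nout E F := by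
    rintro v (⟨hv, u, ⟨huA, huF⟩, huv⟩ | ⟨hv, u, hu | hu, huv⟩)
    · by_cases hvA : v ∈ A
      · exact Or.inr ⟨fun hvF => hv ⟨hvA, hvF⟩, u, huF, huv⟩
      · exact Or.inl ⟨hvA, u, huA, huv⟩
    · exact Or.inl ⟨fun h => hv (Or.inl h), u, hu, huv⟩
    · exact Or.inr ⟨fun h => hv (Or.inr h), u, hu, huv⟩
  have hinter : Nout E (A ∩ F) ∩ Nout E (A ∪ F) ⊆ Nout E A ∩ Nout E F := by
    rintro v ⟨⟨-, u, ⟨huA, huF⟩, huv⟩, hv, -⟩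
    exact ⟨⟨fun h => hv (Or.inl h), u, huA, huv⟩, ⟨fun h => hv (Or.inr h), u, huF, huv⟩⟩
  rw [← Set.ncard_union_add_ncard_inter, ← Set.ncard_union_add_ncard_inter (Nout E A)]
  exact add_le_add (Set.ncard_le_ncard hunion) (Set.ncard_le_ncard hinter)

theorem ncard_Nout_inter_le [Finite V] (A F : Set V) :
    (Nout E (A ∩ F)).ncard ≤
      (Nout E A ∩ F).ncard + (A ∩ Nout E F).ncard + (Nout E A ∩ Nout E F).ncard := by
  have hsub : Nout E (A ∩ F) ⊆ (Nout E A ∩ F) ∪ (A ∩ Nout E F) ∪ (Nout E A ∩ Nout E F) := by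
    rintro v ⟨hv, u, ⟨huA, huF⟩, huv⟩
    by_cases hvA : v ∈ A <;> by_cases hvF : v ∈ F
    · exact (hv ⟨hvA, hvF⟩).elim
    · exact Or.inl (Or.inr ⟨hvA, hvF, u, huF, huv⟩)
    · exact Or.inl (Or.inl ⟨⟨hvA, u, huA, huv⟩, hvF⟩)
    · exact Or.inr ⟨⟨hvA, u, huA, huv⟩, hvF, u, huF, huv⟩
  refine (Set.ncard_le_ncard hsub).trans ((Set.ncard_union_le _ _).trans ?_)
  gcongr
  exact Set.ncard_union_le _ _

theorem ncard_eq_inter_add_inter_Nout_add_inter_far [Finite V] (X F : Set V) :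
    X.ncard = (X ∩ F).ncard + (X ∩ Nout E F).ncard + (X ∩ far E F).ncard := by
  rw [← Set.ncard_inter_add_ncard_sdiff_eq_ncard X F,
    ← Set.ncard_inter_add_ncard_sdiff_eq_ncard (X \ F) (Nout E F), add_assoc]
  congr 3
  · ext x
    exact ⟨fun h => ⟨h.1.1, h.2⟩, fun h => ⟨⟨h.1, h.2.1⟩, h.2⟩⟩
  · ext x
    simp only [far, Set.mem_sdiff, Set.mem_inter_iff, Set.mem_compl_iff, Set.mem_union]
    tauto

section Atom

variable [Finite V]

/-- Minimality is over the fragments of both `E` and its reverse, as in Hamidoune's theory of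
atoms of digraphs. -/
def IsFragmentAtom (E : V → V → Prop) (A : Set V) : Prop :=
  IsFragment E A ∧ ∀ B, IsFragment E B ∨ IsFragment (Function.swap E) B → A.ncard ≤ B.ncard

theorem exists_isFragmentAtom (h : ∃ T : Set V, ¬ SCOn E Tᶜ) :
    ∃ A, IsFragmentAtom E A ∨ IsFragmentAtom (Function.swap E) A := by
  obtain ⟨B₀, hB₀⟩ := exists_isFragment h
  obtain ⟨A, hA | hA, hmin⟩ := Set.exists_min_image
    {B | IsFragment E B ∨ IsFragment (Function.swap E) B} Set.ncard
    (Set.toFinite _) ⟨B₀, Or.inl hB₀⟩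
  · exact ⟨A, Or.inl ⟨hA, hmin⟩⟩
  · exact ⟨A, Or.inr ⟨hA, fun B hB => hmin B hB.symm⟩⟩

/- Otherwise the negative fragment `far E F` lies inside `A ∪ Nout E A`, and comparing its size
with `A` shows that `Nout E (A ∩ F)` is smaller than a minimum cut. -/
theorem IsFragmentAtom.far_inter_far_nonempty (hA : IsFragmentAtom E A) (hF : IsFragment E F)
    (hAF : (A ∩ F).Nonempty) : (far E A ∩ far E F).Nonempty := by
  by_contra hempty
  rw [Set.not_nonempty_iff_eq_empty] at hempty
  have hκ : kappa E ≤ (Nout E (A ∩ F)).ncard :=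
    kappa_le_ncard_Nout ⟨hAF, hA.1.1.2.mono (far_anti Set.inter_subset_left)⟩
  have hAF' : A.ncard ≤ (far E F).ncard := hA.2 _ (Or.inr hF.swap_far)
  have hX := ncard_eq_inter_add_inter_Nout_add_inter_far (E := E) (Nout E A) F
  have hA' := ncard_eq_inter_add_inter_Nout_add_inter_far (E := E) A F
  have hF' := ncard_eq_inter_add_inter_Nout_add_inter_far (E := E) (far E F) A
  rw [Set.inter_comm (far E F) (far E A), hempty, Set.ncard_empty, Set.inter_comm (far E F),
    Set.inter_comm (far E F)] at hF'
  have hpos : 0 < (A ∩ F).ncard := (Set.ncard_pos (Set.toFinite _)).2 hAF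
  have hI := ncard_Nout_inter_le (E := E) A F
  have hκA := hA.1.2
  omega

theorem IsFragmentAtom.subset_of_inter_nonempty (hA : IsFragmentAtom E A) (hF : IsFragment E F)
    (hAF : (A ∩ F).Nonempty) : A ⊆ F := by
  have hI : IsPart E (A ∩ F) := ⟨hAF, hA.1.1.2.mono (far_anti Set.inter_subset_left)⟩
  have hU : IsPart E (A ∪ F) := ⟨hA.1.1.1.mono Set.subset_union_left,
    (hA.far_inter_far_nonempty hF hAF).mono far_inter_far_subset_far_union⟩
  have hsub := ncard_Nout_inter_add_ncard_Nout_union_le (E := E) A F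
  have hκU := kappa_le_ncard_Nout hU
  rw [hA.1.2, hF.2] at hsub
  have hIfrag : IsFragment E (A ∩ F) := ⟨hI, by have := kappa_le_ncard_Nout hI; omega⟩
  exact Set.inter_eq_left.1
    (Set.eq_of_subset_of_ncard_le Set.inter_subset_left (hA.2 _ (Or.inl hIfrag)))

end Atom

end Digraph

section Cayley

variable {G : Type*} [Group G] {S A : Set G}

theorem Nout_cayRel (S A : Set G) : Nout (cayRel S) A = (A * S) \ A := by
  ext x
  simp only [Nout, cayRel, Set.mem_ofPred_eq, Set.mem_sdiff, Set.mem_mul]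
  constructor
  · rintro ⟨hx, y, hy, hyx⟩
    exact ⟨⟨y, hy, _, hyx, mul_inv_cancel_left y x⟩, hx⟩
  · rintro ⟨⟨y, hy, t, ht, rfl⟩, hx⟩
    exact ⟨hx, y, hy, by rwa [inv_mul_cancel_left]⟩

theorem Nout_cayRel_singleton_one (hS : (1 : G) ∉ S) : Nout (cayRel S) {1} = S := by
  ext x
  simp only [Nout, cayRel, Set.mem_ofPred_eq, Set.mem_singleton_iff, exists_eq_left, inv_one,
    one_mul]
  exact ⟨And.right, fun hx => ⟨ne_of_mem_of_not_mem hx hS, hx⟩⟩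

theorem Nout_cayRel_smul (g : G) (A : Set G) :
    Nout (cayRel S) (g • A) = g • Nout (cayRel S) A := by
  ext x
  simp only [Nout_cayRel, Set.mem_smul_set_iff_inv_smul_mem, Set.mem_sdiff, Set.mem_mul,
    smul_eq_mul]
  refine and_congr_left fun _ => ⟨?_, ?_⟩
  · rintro ⟨y, hy, t, ht, rfl⟩
    exact ⟨_, hy, t, ht, mul_assoc _ _ _⟩
  · rintro ⟨y, hy, t, ht, hyt⟩
    exact ⟨g * y, by rwa [inv_mul_cancel_left], t, ht, by rw [mul_assoc, hyt, mul_inv_cancel_left]⟩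

theorem far_cayRel_smul (g : G) (A : Set G) :
    far (cayRel S) (g • A) = g • far (cayRel S) A := by
  rw [far, far, Nout_cayRel_smul, ← Set.smul_set_union, Set.smul_set_compl]

theorem swap_cayRel (S : Set G) : Function.swap (cayRel S) = cayRel S⁻¹ := by
  ext x y
  simp only [Function.swap, cayRel, Set.mem_inv, mul_inv_rev, inv_inv]

theorem IsPart.ne_top {E : G → G → Prop} {H : Subgroup G} (hH : IsPart E H) : H ≠ ⊤ := by
  rintro rfl
  obtain ⟨c, hc⟩ := hH.2
  exact hc (Or.inl (Subgroup.mem_top c))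

variable [Finite G]

theorem IsFragment.smul (hA : IsFragment (cayRel S) A) (g : G) :
    IsFragment (cayRel S) (g • A) := by
  obtain ⟨⟨hne, hfar⟩, hcard⟩ := hA
  refine ⟨⟨hne.smul_set, ?_⟩, ?_⟩
  · change (far _ _).Nonempty
    rw [far_cayRel_smul]
    exact hfar.smul_set
  · rw [Nout_cayRel_smul, Set.ncard_smul_set, hcard]

theorem kappa_cayRel_le_ncard (hS : (1 : G) ∉ S) : kappa (cayRel S) ≤ S.ncard := by
  by_cases hfar : ∃ w, w ∉ insert 1 S
  · obtain ⟨w, hw⟩ := hfar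
    have hpart : IsPart (cayRel S) {1} :=
      ⟨Set.singleton_nonempty 1, w, by rwa [Nout_cayRel_singleton_one hS, ← Set.insert_eq]⟩
    simpa only [Nout_cayRel_singleton_one hS] using kappa_le_ncard_Nout hpart
  · push Not at hfar
    have hcomplete : ∀ x y : G, x ≠ y → cayRel S x y := fun x y hxy =>
      (hfar (x⁻¹ * y)).resolve_left (by rwa [inv_mul_eq_one])
    have hcard := Set.ncard_insert_le 1 S
    rw [Set.eq_univ_of_forall hfar, Set.ncard_univ] at hcard
    rw [kappa_eq_of_forall_ne hcomplete]
    omega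

theorem IsFragmentAtom.smul (hA : IsFragmentAtom (cayRel S) A) (g : G) :
    IsFragmentAtom (cayRel S) (g • A) :=
  ⟨hA.1.smul g, fun B hB => (Set.ncard_smul_set g A).trans_le (hA.2 B hB)⟩

/- Each element `g` of an atom `A ∋ 1` maps it onto the fragment `g • A`, which meets `A` in `g`
and therefore equals it; so `A` is its own stabiliser. -/
theorem IsFragmentAtom.exists_subgroup (hA : IsFragmentAtom (cayRel S) A) :
    ∃ H : Subgroup G, IsFragment (cayRel S) H := by
  obtain ⟨a, ha⟩ := hA.1.1.1
  set A₁ := a⁻¹ • A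
  have hA₁ : IsFragmentAtom (cayRel S) A₁ := hA.smul a⁻¹
  have h1 : (1 : G) ∈ A₁ := ⟨a, ha, inv_mul_cancel a⟩
  have hstab : ∀ g ∈ A₁, g • A₁ = A₁ := fun g hg =>
    (Set.eq_of_subset_of_ncard_le
      (hA₁.subset_of_inter_nonempty (hA₁.1.smul g) ⟨g, hg, 1, h1, mul_one g⟩)
      (Set.ncard_smul_set g A₁).le).symm
  have hH : (MulAction.stabilizer G A₁ : Set G) = A₁ := by
    ext g
    refine ⟨fun hg => ?_, fun hg => hstab g hg⟩
    rw [← MulAction.mem_stabilizer_iff.1 hg]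
    exact ⟨1, h1, mul_one g⟩
  exact ⟨_, hH ▸ hA₁.1⟩

theorem exists_subgroup_ne_top_ncard_eq_kappa (h : ∃ T : Set G, ¬ SCOn (cayRel S) Tᶜ) :
    ∃ H : Subgroup G, H ≠ ⊤ ∧ ((((H : Set G) * S) \ H).ncard = kappa (cayRel S) ∨
      (((H : Set G) * S⁻¹) \ H).ncard = kappa (cayRel S)) := by
  obtain ⟨A, hA | hA⟩ := exists_isFragmentAtom h
  · obtain ⟨H, hH⟩ := hA.exists_subgroup
    exact ⟨H, hH.1.ne_top, Or.inl (Nout_cayRel S H ▸ hH.2)⟩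
  · rw [swap_cayRel] at hA
    obtain ⟨H, hH⟩ := hA.exists_subgroup
    refine ⟨H, hH.1.ne_top, Or.inr ?_⟩
    rw [← Nout_cayRel, hH.2, ← swap_cayRel, kappa_swap]

end Cayley

section Hierarchical

variable {G : Type*} [Group G]

theorem two_mul_card_le_card_of_lt [Finite G] {H K : Subgroup G} (h : H < K) :
    2 * Nat.card H ≤ Nat.card K := by
  have hcard := Subgroup.relIndex_mul_relIndex ⊥ H K bot_le h.le
  rw [Subgroup.relIndex_bot_left, Subgroup.relIndex_bot_left] at hcard
  have h1 : H.relIndex K ≠ 1 := fun h1 => h.not_ge (Subgroup.relIndex_eq_one.1 h1)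
  have h0 : H.relIndex K ≠ 0 := by
    rintro h0
    rw [h0, mul_zero] at hcard
    exact Nat.card_pos.ne hcard
  rw [← hcard, mul_comm (Nat.card H)]
  exact Nat.mul_le_mul_right _ (show 2 ≤ H.relIndex K by omega)

theorem two_pow_card_le_card_of_lt_succ [Finite G] {K : ℕ → Subgroup G} (hK : Monotone K)
    {T : Finset ℕ} {n : ℕ} (hT : ∀ t ∈ T, t < n ∧ K t < K (t + 1)) :
    2 ^ T.card ≤ Nat.card (K n) := by
  induction T using Finset.induction_on_max generalizing n with
  | empty => exact Nat.one_le_iff_ne_zero.2 Nat.card_pos.ne'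
  | insert a T hlt ih =>
    obtain ⟨han, hKa⟩ := hT a (Finset.mem_insert_self a T)
    rw [Finset.card_insert_of_notMem fun ha => (hlt a ha).false, pow_succ']
    calc 2 * 2 ^ T.card
        ≤ 2 * Nat.card (K a) := Nat.mul_le_mul_left 2
          (ih fun t ht => ⟨hlt t ht, (hT t (Finset.mem_insert_of_mem ht)).2⟩)
      _ ≤ Nat.card (K (a + 1)) := two_mul_card_le_card_of_lt hKa
      _ ≤ Nat.card (K n) := Subgroup.card_le_of_le (hK han)

variable {s : ℕ → G} {k : ℕ}

def prefixClosure (s : ℕ → G) (i : ℕ) : Subgroup G :=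
  Subgroup.closure (s '' Set.Ico 1 i)

theorem prefixClosure_mono (s : ℕ → G) : Monotone (prefixClosure s) := fun _ _ h =>
  Subgroup.closure_mono (Set.image_mono (Set.Ico_subset_Ico_right h))

theorem mem_prefixClosure {i j : ℕ} (hj : 1 ≤ j) (hji : j < i) : s j ∈ prefixClosure s i :=
  Subgroup.subset_closure ⟨j, ⟨hj, hji⟩, rfl⟩

theorem closure_image_inv {ι : Type*} (s : ι → G) (X : Set ι) :
    Subgroup.closure (s⁻¹ '' X) = Subgroup.closure (s '' X) := by
  rw [← Subgroup.closure_inv (s '' X), ← Set.image_inv_eq_inv, Set.image_image]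
  rfl

/-- For generators different from `1`, this is equivalent to the subgroups `⟨s 1, …, s i⟩`,
`1 ≤ i ≤ k`, being pairwise distinct. -/
def IsHierarchical (s : ℕ → G) (k : ℕ) : Prop :=
  ∀ i ∈ Set.Icc 1 k, s i ∉ prefixClosure s i

theorem isHierarchical_of_closure_ne [DecidableEq G] (hne : ∀ i ∈ Finset.Icc 1 k, s i ≠ 1)
    (hhier : ∀ i ∈ Finset.Icc 1 k, ∀ j ∈ Finset.Icc 1 k, i ≠ j →
      Subgroup.closure (((Finset.Icc 1 i).image s : Finset G) : Set G) ≠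
        Subgroup.closure (((Finset.Icc 1 j).image s : Finset G) : Set G)) :
    IsHierarchical s k := by
  simp only [Finset.coe_image, Finset.coe_Icc, Finset.mem_Icc] at hne hhier
  rintro i ⟨hi1, hik⟩ hmem
  obtain ⟨j, rfl⟩ : ∃ j, i = j + 1 := ⟨i - 1, by omega⟩
  rcases Nat.eq_zero_or_pos j with rfl | hj
  · simp [prefixClosure] at hmem
    exact hne 1 ⟨le_rfl, hik⟩ hmem
  · refine hhier (j + 1) ⟨hi1, hik⟩ j ⟨hj, by omega⟩ (by omega) (le_antisymm ?_ ?_)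
    · rw [← Set.Ico_insert_right hi1, Set.image_insert_eq, Subgroup.closure_le,
        Set.insert_subset_iff, ← Set.Ico_add_one_right_eq_Icc]
      exact ⟨hmem, Subgroup.subset_closure⟩
    · exact Subgroup.closure_mono (Set.image_mono (Set.Icc_subset_Icc_right j.le_succ))

theorem IsHierarchical.injOn (hs : IsHierarchical s k) : Set.InjOn s (Set.Icc 1 k) := by
  intro i hi j hj hij
  by_contra hne
  rcases lt_or_gt_of_ne hne with h | h
  · exact hs j hj (hij ▸ mem_prefixClosure hi.1 h)
  · exact hs i hi (hij ▸ mem_prefixClosure hj.1 h)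

theorem IsHierarchical.inv (hs : IsHierarchical s k) : IsHierarchical s⁻¹ k := by
  intro i hi h
  have := inv_mem h
  rw [Pi.inv_apply, inv_inv, prefixClosure, closure_image_inv] at this
  exact hs i hi this

theorem IsHierarchical.one_notMem (hs : IsHierarchical s k) : (1 : G) ∉ s '' Set.Icc 1 k := by
  rintro ⟨i, hi, h⟩
  exact hs i hi (h ▸ one_mem _)

theorem IsHierarchical.two_pow_card_le_card [Finite G] (hs : IsHierarchical s k)
    (H : Subgroup G) {T : Finset ℕ}
    (hT : ∀ t ∈ T, t ∈ Set.Icc 1 k ∧ ∃ y ∈ prefixClosure s t, s t * y ∈ H) :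
    2 ^ T.card ≤ Nat.card H := by
  refine (two_pow_card_le_card_of_lt_succ (K := fun i => H ⊓ prefixClosure s i)
    (fun _ _ h => inf_le_inf_left H (prefixClosure_mono s h)) (n := k + 1) fun t ht => ?_).trans
    (Subgroup.card_le_of_le inf_le_left)
  obtain ⟨htk, y, hy, hyH⟩ := hT t ht
  have hmem : s t * y ∈ prefixClosure s (t + 1) :=
    mul_mem (mem_prefixClosure htk.1 (lt_add_one t)) (prefixClosure_mono s t.le_succ hy)
  have hnotMem : s t * y ∉ prefixClosure s t :=
    fun h => hs t htk (by simpa using mul_mem h (inv_mem hy))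
  exact ⟨Nat.lt_succ_of_le htk.2, SetLike.lt_iff_le_and_exists.2
    ⟨inf_le_inf_left H (prefixClosure_mono s t.le_succ), s t * y, ⟨hyH, hmem⟩,
      fun h => hnotMem h.2⟩⟩

theorem IsHierarchical.card_add_card_le_ncard_mul_sdiff [Finite G] (hs : IsHierarchical s k)
    {H : Subgroup G} {i₀ : ℕ} (hi₀ : i₀ ∈ Set.Icc 1 k) (hsi₀ : s i₀ ∉ H) {R : Finset ℕ}
    (hR : ∀ t ∈ R, t ∈ Set.Icc 1 k ∧ s t ∉ H ∧ s t * (s i₀)⁻¹ ∉ H) :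
    R.card + Nat.card H ≤ (((H : Set G) * s '' Set.Icc 1 k) \ H).ncard := by
  have hdisj : Disjoint (s '' R) ((· * s i₀) '' (H : Set G)) := by
    refine Set.disjoint_left.2 ?_
    rintro _ ⟨t, ht, rfl⟩ ⟨h, hh, hht⟩
    exact (hR t ht).2.2 (by rwa [← hht, mul_inv_cancel_right])
  have hsub : s '' R ∪ (· * s i₀) '' (H : Set G) ⊆ ((H : Set G) * s '' Set.Icc 1 k) \ H := by
    rintro _ (⟨t, ht, rfl⟩ | ⟨h, hh, rfl⟩)
    · exact ⟨⟨1, one_mem H, s t, ⟨t, (hR t ht).1, rfl⟩, one_mul _⟩, (hR t ht).2.1⟩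
    · exact ⟨⟨h, hh, s i₀, ⟨i₀, hi₀, rfl⟩, rfl⟩,
        fun h' => hsi₀ (by simpa using mul_mem (inv_mem hh) h')⟩
  calc R.card + Nat.card H = (s '' R).ncard + ((· * s i₀) '' (H : Set G)).ncard := by
        rw [(hs.injOn.mono fun t ht => (hR t ht).1).ncard_image, Set.ncard_coe_finset,
          Set.ncard_image_of_injective _ (mul_left_injective _), ← Nat.card_coe_set_eq]
        rfl
    _ = (s '' R ∪ (· * s i₀) '' (H : Set G)).ncard := (Set.ncard_union_eq hdisj).symm
    _ ≤ _ := Set.ncard_le_ncard hsub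

/- Let `s i₀` be the first generator outside `H`. The indices `t ≠ i₀` with
`s t ∉ H ∪ H * s i₀` give distinct elements `s t` of `H * S \ H` outside the coset
`H * s i₀ ⊆ H * S \ H`; each of the others yields an element `s t` or `s t * (s i₀)⁻¹` of `H`
escaping `prefixClosure s t`, so there are fewer than `|H|` of them. -/
theorem IsHierarchical.le_ncard_mul_sdiff [Finite G] (hs : IsHierarchical s k)
    (hgen : Subgroup.closure (s '' Set.Icc 1 k) = ⊤) {H : Subgroup G} (hH : H ≠ ⊤) :
    k ≤ (((H : Set G) * s '' Set.Icc 1 k) \ H).ncard := by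
  classical
  have hex : ∃ i, i ∈ Set.Icc 1 k ∧ s i ∉ H := by
    by_contra! hall
    exact hH (eq_top_iff.2 (hgen ▸ (Subgroup.closure_le H).2 (Set.image_subset_iff.2 hall)))
  obtain ⟨hi₀, hsi₀⟩ := Nat.find_spec hex
  set i₀ := Nat.find hex
  set I := (Finset.Icc 1 k).erase i₀
  let p : ℕ → Prop := fun t => s t ∈ H ∨ s t * (s i₀)⁻¹ ∈ H
  have hI : ∀ {t}, t ∈ I → t ≠ i₀ ∧ t ∈ Set.Icc 1 k := by simp [I]
  have hcard : {t ∈ I | p t}.card + {t ∈ I | ¬ p t}.card = k - 1 := by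
    rw [Finset.card_filter_add_card_filter_not, Finset.card_erase_of_mem (by simpa using hi₀),
      Nat.card_Icc, Nat.add_sub_cancel]
  have hp : 2 ^ {t ∈ I | p t}.card ≤ Nat.card H := by
    refine hs.two_pow_card_le_card H fun t ht => ?_
    obtain ⟨ht, hpt⟩ := Finset.mem_filter.1 ht
    obtain ⟨hti₀, htk⟩ := hI ht
    refine ⟨htk, ?_⟩
    rcases hpt with hst | hst
    · exact ⟨1, one_mem _, by rwa [mul_one]⟩
    · have hst' : s t ∉ H := fun h => hsi₀ (by simpa using mul_mem (inv_mem hst) h)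
      have hlt : i₀ < t := (Nat.find_min' hex ⟨htk, hst'⟩).lt_of_ne (Ne.symm hti₀)
      exact ⟨(s i₀)⁻¹, inv_mem (mem_prefixClosure hi₀.1 hlt), hst⟩
  have hnp := hs.card_add_card_le_ncard_mul_sdiff hi₀ hsi₀ (R := {t ∈ I | ¬ p t}) fun t ht => by
    obtain ⟨ht, hpt⟩ := Finset.mem_filter.1 ht
    exact ⟨(hI ht).2, not_or.1 hpt⟩
  have := {t ∈ I | p t}.card.lt_two_pow_self
  omega

end Hierarchical

theorem kappa_cayRel_of_isHierarchical {G : Type*} [Group G] [Finite G] {s : ℕ → G} {k : ℕ}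
    (hs : IsHierarchical s k) (hgen : Subgroup.closure (s '' Set.Icc 1 k) = ⊤) :
    kappa (cayRel (s '' Set.Icc 1 k)) = (s '' Set.Icc 1 k).ncard := by
  refine le_antisymm (kappa_cayRel_le_ncard hs.one_notMem) ?_
  have hk : (s '' Set.Icc 1 k).ncard = k := by
    rw [hs.injOn.ncard_image, ← Finset.coe_Icc, Set.ncard_coe_finset, Nat.card_Icc,
      Nat.add_sub_cancel]
  rw [hk]
  by_cases hcut : ∃ T : Set G, ¬ SCOn (cayRel (s '' Set.Icc 1 k)) Tᶜ
  · obtain ⟨H, hH, hκ | hκ⟩ := exists_subgroup_ne_top_ncard_eq_kappa hcut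
    · exact hκ ▸ hs.le_ncard_mul_sdiff hgen hH
    · rw [← hκ, ← Set.image_inv_eq_inv, Set.image_image]
      refine hs.inv.le_ncard_mul_sdiff ?_ hH
      rwa [closure_image_inv]
  · rw [kappa, if_neg hcut]
    have := Set.ncard_lt_card (s := s '' Set.Icc 1 k) fun h => hs.one_notMem (h ▸ trivial)
    omega

theorem stmt_15_general {G : Type*} [Group G] [Finite G] [DecidableEq G]
    (k : ℕ) (s : ℕ → G)
    (hne : ∀ i ∈ Finset.Icc 1 k, s i ≠ 1)
    (hhier : ∀ i ∈ Finset.Icc 1 k, ∀ j ∈ Finset.Icc 1 k, i ≠ j →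
      Subgroup.closure (((Finset.Icc 1 i).image s : Finset G) : Set G) ≠
        Subgroup.closure (((Finset.Icc 1 j).image s : Finset G) : Set G))
    (hgen : Subgroup.closure (((Finset.Icc 1 k).image s : Finset G) : Set G) = ⊤) :
    kappa (cayRel (((Finset.Icc 1 k).image s : Finset G) : Set G)) =
      ((Finset.Icc 1 k).image s).card := by
  have hs : IsHierarchical s k := isHierarchical_of_closure_ne hne hhier
  rw [Finset.coe_image, Finset.coe_Icc] at hgen
  rw [← Set.ncard_coe_finset, Finset.coe_image, Finset.coe_Icc]
  exact kappa_cayRel_of_isHierarchical hs hgen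

/-- A connected hierarchical Cayley digraph is optimally vertex connected:
`κ(Cay(G,S)) = |S|`. -/
theorem stmt_15 {G : Type*} [Group G] [Finite G] [DecidableEq G]
    (k : ℕ) (hk : 1 ≤ k) (s : ℕ → G)
    (hne : ∀ i ∈ Finset.Icc 1 k, s i ≠ 1)
    (hhier : ∀ i ∈ Finset.Icc 1 k, ∀ j ∈ Finset.Icc 1 k, i ≠ j →
      Subgroup.closure (((Finset.Icc 1 i).image s : Finset G) : Set G) ≠
        Subgroup.closure (((Finset.Icc 1 j).image s : Finset G) : Set G))
    (hgen : Subgroup.closure (((Finset.Icc 1 k).image s : Finset G) : Set G) = ⊤) :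
    kappa (cayRel (((Finset.Icc 1 k).image s : Finset G) : Set G)) =
      ((Finset.Icc 1 k).image s).card :=
  stmt_15_general k s hne hhier hgen
end

section
/- Let 𝒢 = 𝒢(G,H,S) be a strongly connected Cayley coset digraph with S nonempty whose generators are distinct double-coset representatives. Then the edge connectivity of 𝒢 equals its degree: λ(𝒢) = d = Σ_{s∈S} |HsH/H|. -/
open Classical

/-- The double coset `K s K`. -/
def dcoset {G : Type*} [Group G] (K : Subgroup G) (s : G) : Set G :=
  {g | ∃ h₁ ∈ K, ∃ h₂ ∈ K, g = h₁ * s * h₂}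

/-- Edge relation of the Cayley coset digraph `𝒢(G,H,S)` on the left cosets `G ⧸ H`:
there is an edge from `g₁H` to `g₂H` iff `g₁⁻¹g₂ ∈ HsH` for some `s ∈ S`
(equivalently, `g₁Hs ∩ g₂H ≠ ∅`). -/
def cayleyRel {G : Type*} [Group G] (H : Subgroup G) (S : Set G) :
    G ⧸ H → G ⧸ H → Prop :=
  fun x y => ∃ s ∈ S, ∃ g₁ g₂ : G, (g₁ : G ⧸ H) = x ∧ (g₂ : G ⧸ H) = y ∧
    g₁⁻¹ * g₂ ∈ dcoset H s

/-- `d_s = |HsH/H|`, the number of left cosets of `H` contained in `HsH`. -/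
noncomputable def dval {G : Type*} [Group G] (H : Subgroup G) (s : G) : ℕ :=
  ((QuotientGroup.mk '' dcoset H s : Set (G ⧸ H))).ncard

/-- The set of edges leaving `A`. -/
def NeEdges {V : Type*} (E : V → V → Prop) (A : Set V) : Set (V × V) :=
  {p | E p.1 p.2 ∧ p.1 ∈ A ∧ p.2 ∉ A}

/-- Edge connectivity: the least cardinality of a set `F` of edges whose removal
leaves a non-strongly-connected digraph. -/
noncomputable def lambdaE {V : Type*} [Finite V] (E : V → V → Prop) : ℕ :=
  sInf {m | ∃ F : Set (V × V), (∀ p ∈ F, E p.1 p.2) ∧ F.ncard = m ∧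
    ¬ SC (fun x y => E x y ∧ (x, y) ∉ F)}

/-!
Left translations act transitively on `G ⧸ H` by automorphisms of `𝒢`, and the out-neighbourhood
of `H` is the disjoint union of the sets `HsH/H`; so `𝒢` is a loopless vertex-transitive digraph
of out-degree `d`, and it suffices to prove Mader's theorem for such digraphs.

Call a set of vertices a minimum cut if no proper nonempty set has fewer leaving edges, and an
atom if it is a minimum cut of least cardinality. Transitivity makes in- and out-degrees equal,
so the complement of a minimum cut is again one, and an atom has at most half of the vertices;
submodularity of the number of leaving edges then shows that two atoms which meet coincide.
Hence an automorphism moving one vertex of an atom `A` to another fixes `A`, every vertex of `A`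
sends the same number `t ≥ 1` of edges out of `A`, and, since at most `|A| - 1` of its `d`
out-neighbours lie in `A`, the cut value is `|A| t ≥ t + |A| - 1 ≥ d`.
-/

section Cuts

variable {V : Type*} [Fintype V] {E : V → V → Prop}

lemma ncard_setOf_fst_mem (P : V → V → Prop) (A : Set V) :
    {p : V × V | p.1 ∈ A ∧ P p.1 p.2}.ncard = ∑ v ∈ A.toFinset, {y | P v y}.ncard := by
  have : {p : V × V | p.1 ∈ A ∧ P p.1 p.2} =
      ⋃ v ∈ (A.toFinset : Set V), Prod.mk v '' {y | P v y} := by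
    ext ⟨x, y⟩; simp [and_comm]
  rw [this, A.toFinset.finite_toSet.ncard_biUnion (fun _ _ => Set.toFinite _),
    finsum_mem_coe_finset]
  · simp [Set.ncard_image_of_injective _ (Prod.mk_right_injective _)]
  · intro a _ b _ hab
    simp only [Function.onFun, Set.disjoint_left, Set.mem_image]
    grind

lemma ncard_setOf_snd_mem (P : V → V → Prop) (A : Set V) :
    {p : V × V | p.2 ∈ A ∧ P p.1 p.2}.ncard = ∑ v ∈ A.toFinset, {x | P x v}.ncard := by
  rw [← ncard_setOf_fst_mem (fun v x => P x v) A,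
    ← Set.ncard_image_of_injective _ Prod.swap_injective]
  congr 1
  ext ⟨x, y⟩
  simp

lemma ncard_neEdges_eq_sum (A : Set V) :
    (NeEdges E A).ncard = ∑ v ∈ A.toFinset, {y | E v y ∧ y ∉ A}.ncard := by
  rw [← ncard_setOf_fst_mem]
  congr 1
  ext ⟨x, y⟩
  simp only [NeEdges, Set.mem_ofPred_eq]
  tauto

lemma ncard_neEdges_singleton (hirr : ∀ v, ¬ E v v) (v : V) :
    (NeEdges E {v}).ncard = {y | E v y}.ncard := by
  rw [ncard_neEdges_eq_sum, Set.toFinset_singleton, Finset.sum_singleton]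
  congr 1
  ext y
  simp only [Set.mem_ofPred_eq, Set.mem_singleton_iff, and_iff_left_iff_imp]
  rintro hvy rfl
  exact hirr y hvy

lemma ncard_neEdges_compl (hdeg : ∀ v, {x | E x v}.ncard = {y | E v y}.ncard) (A : Set V) :
    (NeEdges E Aᶜ).ncard = (NeEdges E A).ncard := by
  set internal := {p : V × V | E p.1 p.2 ∧ p.1 ∈ A ∧ p.2 ∈ A}
  have hout : {p : V × V | p.1 ∈ A ∧ E p.1 p.2} = NeEdges E A ∪ internal := by
    ext; simp only [NeEdges, internal, Set.mem_union, Set.mem_ofPred_eq]; tauto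
  have hin : {p : V × V | p.2 ∈ A ∧ E p.1 p.2} = NeEdges E Aᶜ ∪ internal := by
    ext; simp only [NeEdges, internal, Set.mem_union, Set.mem_ofPred_eq, Set.mem_compl_iff]; tauto
  have hsum := ncard_setOf_snd_mem E A
  rw [Finset.sum_congr rfl fun v _ => hdeg v, ← ncard_setOf_fst_mem, hin, hout,
    Set.ncard_union_eq, Set.ncard_union_eq] at hsum
  · omega
  all_goals
    rw [Set.disjoint_left]
    simp only [NeEdges, internal, Set.mem_ofPred_eq, Set.mem_compl_iff]
    tauto

lemma ncard_neEdges_inter_add_union_le (A B : Set V) :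
    (NeEdges E (A ∩ B)).ncard + (NeEdges E (A ∪ B)).ncard
      ≤ (NeEdges E A).ncard + (NeEdges E B).ncard := by
  rw [← Set.ncard_union_add_ncard_inter, ← Set.ncard_union_add_ncard_inter (NeEdges E A)]
  apply Nat.add_le_add <;> refine Set.ncard_le_ncard (fun p => ?_)
  all_goals
    simp only [NeEdges, Set.mem_union, Set.mem_inter_iff, Set.mem_ofPred_eq]
    tauto

lemma ncard_setOf_rel_le (hirr : ∀ v, ¬ E v v) {A : Set V} {v : V} (hv : v ∈ A) :
    {y | E v y}.ncard ≤ {y | E v y ∧ y ∉ A}.ncard + (A.ncard - 1) := by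
  have hsplit : {y | E v y} ⊆ {y | E v y ∧ y ∉ A} ∪ A \ {v} := by
    intro y hy
    by_cases hyA : y ∈ A
    · exact Or.inr ⟨hyA, fun h => hirr v (h ▸ hy)⟩
    · exact Or.inl ⟨hy, hyA⟩
  calc {y | E v y}.ncard ≤ ({y | E v y ∧ y ∉ A} ∪ A \ {v}).ncard := Set.ncard_le_ncard hsplit
    _ ≤ _ := by
      rw [← Set.ncard_sdiff_singleton_of_mem hv]
      exact Set.ncard_union_le _ _

end Cuts

section Connectivity

variable {V : Type*} {E : V → V → Prop} {A : Set V}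

lemma SC.neEdges_nonempty (hconn : SC E) (hA : A.Nonempty) (hA' : Aᶜ.Nonempty) :
    (NeEdges E A).Nonempty := by
  obtain ⟨a, ha⟩ := hA
  obtain ⟨b, hb⟩ := hA'
  by_contra hempty
  have hclosed : ∀ x ∈ A, ∀ y, E x y → y ∈ A := fun x hx y hxy =>
    by_contra fun hy => hempty ⟨(x, y), hxy, hx, hy⟩
  induction hconn a b with
  | refl => exact hb ha
  | tail _ hxy ih => exact hb (hclosed _ (by_contra fun h => ih h) _ hxy)

lemma not_SC_of_sdiff_neEdges (hA : A.Nonempty) (hA' : Aᶜ.Nonempty) :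
    ¬ SC (fun x y => E x y ∧ (x, y) ∉ NeEdges E A) := fun hconn => by
  obtain ⟨p, ⟨hE, hnot⟩, hp, hp'⟩ := hconn.neEdges_nonempty hA hA'
  exact hnot ⟨hE, hp, hp'⟩

lemma exists_neEdges_subset_of_not_SC {F : Set (V × V)}
    (hF : ¬ SC (fun x y => E x y ∧ (x, y) ∉ F)) :
    ∃ A : Set V, A.Nonempty ∧ Aᶜ.Nonempty ∧ NeEdges E A ⊆ F := by
  simp only [SC, not_forall] at hF
  obtain ⟨a, b, hab⟩ := hF
  refine ⟨{x | Relation.ReflTransGen (fun x y => E x y ∧ (x, y) ∉ F) a x},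
    ⟨a, .refl⟩, ⟨b, hab⟩, fun p ⟨hE, hp, hp'⟩ => ?_⟩
  by_contra hpF
  exact hp' (hp.tail ⟨hE, hpF⟩)

end Connectivity

def IsMinCut {V : Type*} (E : V → V → Prop) (A : Set V) : Prop :=
  A.Nonempty ∧ Aᶜ.Nonempty ∧
    ∀ B : Set V, B.Nonempty → Bᶜ.Nonempty → (NeEdges E A).ncard ≤ (NeEdges E B).ncard

def IsEdgeAtom {V : Type*} (E : V → V → Prop) (A : Set V) : Prop :=
  IsMinCut E A ∧ ∀ B : Set V, IsMinCut E B → A.ncard ≤ B.ncard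

section MinCut

variable {V : Type*} [Fintype V] {E : V → V → Prop} {A B : Set V}

lemma IsMinCut.lambdaE_eq (hA : IsMinCut E A) : lambdaE E = (NeEdges E A).ncard := by
  have hmem : (NeEdges E A).ncard ∈ {m | ∃ F : Set (V × V), (∀ p ∈ F, E p.1 p.2) ∧
      F.ncard = m ∧ ¬ SC (fun x y => E x y ∧ (x, y) ∉ F)} :=
    ⟨NeEdges E A, fun _ hp => hp.1, rfl, not_SC_of_sdiff_neEdges hA.1 hA.2.1⟩
  refine le_antisymm (Nat.sInf_le hmem) ?_
  obtain ⟨F, -, hF, hnot⟩ := Nat.sInf_mem ⟨_, hmem⟩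
  obtain ⟨B, hB, hB', hsub⟩ := exists_neEdges_subset_of_not_SC hnot
  calc (NeEdges E A).ncard ≤ (NeEdges E B).ncard := hA.2.2 B hB hB'
    _ ≤ F.ncard := Set.ncard_le_ncard hsub
    _ = lambdaE E := hF

lemma exists_isMinCut [Nontrivial V] : ∃ A, IsMinCut E A := by
  obtain ⟨v, w, hvw⟩ := exists_pair_ne V
  obtain ⟨A, ⟨hA, hA'⟩, hmin⟩ := Set.exists_min_image {A : Set V | A.Nonempty ∧ Aᶜ.Nonempty}
    (fun A => (NeEdges E A).ncard) (Set.toFinite _) ⟨{v}, Set.singleton_nonempty v, w, hvw.symm⟩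
  exact ⟨A, hA, hA', fun B hB hB' => hmin B ⟨hB, hB'⟩⟩

lemma exists_isEdgeAtom [Nontrivial V] : ∃ A, IsEdgeAtom E A := by
  obtain ⟨A, hA, hmin⟩ :=
    Set.exists_min_image {A | IsMinCut E A} Set.ncard (Set.toFinite _) exists_isMinCut
  exact ⟨A, hA, hmin⟩

lemma IsMinCut.compl (hdeg : ∀ v, {x | E x v}.ncard = {y | E v y}.ncard) (hA : IsMinCut E A) :
    IsMinCut E Aᶜ :=
  ⟨hA.2.1, (compl_compl A).symm ▸ hA.1,
    fun B hB hB' => (ncard_neEdges_compl hdeg A).symm ▸ hA.2.2 B hB hB'⟩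

lemma IsMinCut.inter (hA : IsMinCut E A) (hB : IsMinCut E B) (hAB : (A ∩ B).Nonempty)
    (hU : (A ∪ B)ᶜ.Nonempty) : IsMinCut E (A ∩ B) := by
  refine ⟨hAB, hU.mono (Set.compl_subset_compl.2 (Set.inter_subset_left.trans
    Set.subset_union_left)), fun C hC hC' => ?_⟩
  have hsub := ncard_neEdges_inter_add_union_le (E := E) A B
  have hAU := hA.2.2 (A ∪ B) (hA.1.mono Set.subset_union_left) hU
  have hBC := hB.2.2 C hC hC'
  omega

lemma IsEdgeAtom.eq_of_inter_nonempty (hdeg : ∀ v, {x | E x v}.ncard = {y | E v y}.ncard)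
    (hA : IsEdgeAtom E A) (hB : IsEdgeAtom E B) (hAB : (A ∩ B).Nonempty) : A = B := by
  have hk : A.ncard = B.ncard := le_antisymm (hA.2 B hB.1) (hB.2 A hA.1)
  have hU : (A ∪ B)ᶜ.Nonempty := by
    rw [Set.nonempty_compl]
    intro hfull
    have hunion := Set.ncard_union_add_ncard_inter A B
    have htotal := Set.ncard_add_ncard_compl A
    have hhalf := hA.2 _ (hA.1.compl hdeg)
    have hpos := hAB.ncard_pos
    rw [hfull, Set.ncard_univ] at hunion
    omega
  have hI := hA.1.inter hB.1 hAB hU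
  have hIA : A ∩ B = A := Set.eq_of_subset_of_ncard_le Set.inter_subset_left (hA.2 _ hI)
  have hIB : A ∩ B = B := Set.eq_of_subset_of_ncard_le Set.inter_subset_right (hk ▸ hA.2 _ hI)
  exact hIA.symm.trans hIB

end MinCut

def IsVertexTransitive {V : Type*} (E : V → V → Prop) : Prop :=
  ∀ x y : V, ∃ σ : E ≃r E, σ x = y

section Transitive

variable {V : Type*} {E : V → V → Prop}

lemma RelIso.image_setOf_rel (σ : E ≃r E) (v : V) : σ '' {y | E v y} = {y | E (σ v) y} := by
  ext y
  obtain ⟨z, rfl⟩ := σ.surjective y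
  simp [σ.injective.mem_set_image, σ.map_rel_iff]

lemma RelIso.image_setOf_rel_left (σ : E ≃r E) (v : V) : σ '' {x | E x v} = {x | E x (σ v)} := by
  ext x
  obtain ⟨z, rfl⟩ := σ.surjective x
  simp [σ.injective.mem_set_image, σ.map_rel_iff]

lemma RelIso.image_setOf_rel_notMem (σ : E ≃r E) (v : V) (A : Set V) :
    σ '' {y | E v y ∧ y ∉ A} = {y | E (σ v) y ∧ y ∉ σ '' A} := by
  ext y
  obtain ⟨z, rfl⟩ := σ.surjective y
  simp only [Set.mem_ofPred_eq, σ.injective.mem_set_image, σ.map_rel_iff]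

lemma RelIso.image_neEdges (σ : E ≃r E) (A : Set V) :
    Prod.map σ σ '' NeEdges E A = NeEdges E (σ '' A) := by
  ext ⟨x, y⟩
  obtain ⟨x, rfl⟩ := σ.surjective x
  obtain ⟨y, rfl⟩ := σ.surjective y
  rw [show (σ x, σ y) = Prod.map σ σ (x, y) from rfl,
    (σ.injective.prodMap σ.injective).mem_set_image]
  simp only [NeEdges, Set.mem_ofPred_eq, Prod.map_fst, Prod.map_snd, σ.injective.mem_set_image,
    σ.map_rel_iff]

variable {A : Set V}

lemma IsMinCut.image (σ : E ≃r E) (hA : IsMinCut E A) : IsMinCut E (σ '' A) := by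
  refine ⟨hA.1.image σ, ?_, fun B hB hB' => ?_⟩
  · rw [← Set.image_compl_eq σ.bijective]
    exact hA.2.1.image σ
  · rw [← σ.image_neEdges, Set.ncard_image_of_injective _ (σ.injective.prodMap σ.injective)]
    exact hA.2.2 B hB hB'

lemma IsEdgeAtom.image (σ : E ≃r E) (hA : IsEdgeAtom E A) : IsEdgeAtom E (σ '' A) :=
  ⟨hA.1.image σ, fun B hB => (Set.ncard_image_of_injective A σ.injective).trans_le (hA.2 B hB)⟩

lemma IsVertexTransitive.ncard_setOf_rel_eq (hE : IsVertexTransitive E) (u v : V) :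
    {y | E u y}.ncard = {y | E v y}.ncard := by
  obtain ⟨σ, rfl⟩ := hE v u
  rw [← σ.image_setOf_rel, Set.ncard_image_of_injective _ σ.injective]

lemma IsVertexTransitive.ncard_setOf_rel_left_eq (hE : IsVertexTransitive E) (u v : V) :
    {x | E x u}.ncard = {x | E x v}.ncard := by
  obtain ⟨σ, rfl⟩ := hE v u
  rw [← σ.image_setOf_rel_left, Set.ncard_image_of_injective _ σ.injective]

variable [Fintype V]

-- Both degrees are constant, and both sum to the number of edges.
lemma IsVertexTransitive.ncard_setOf_rel_left_eq_ncard_setOf_rel (hE : IsVertexTransitive E)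
    (v : V) : {x | E x v}.ncard = {y | E v y}.ncard := by
  have hin := ncard_setOf_snd_mem E Set.univ
  have hout := ncard_setOf_fst_mem E Set.univ
  simp only [Set.mem_univ, true_and] at hin hout
  have hsum := hin.symm.trans hout
  simp only [hE.ncard_setOf_rel_left_eq _ v, hE.ncard_setOf_rel_eq _ v, Finset.sum_const,
    smul_eq_mul] at hsum
  exact Nat.eq_of_mul_eq_mul_left (Finset.card_pos.2 ⟨v, by simp⟩) hsum

theorem IsVertexTransitive.ncard_setOf_rel_le_ncard_neEdges (hE : IsVertexTransitive E)
    (hirr : ∀ v, ¬ E v v) (hconn : SC E) (hA : IsEdgeAtom E A) (v : V) :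
    {y | E v y}.ncard ≤ (NeEdges E A).ncard := by
  have hdeg := hE.ncard_setOf_rel_left_eq_ncard_setOf_rel
  obtain ⟨a, ha⟩ := hA.1.1
  set t := {y | E a y ∧ y ∉ A}.ncard
  have hconst : ∀ u ∈ A, {y | E u y ∧ y ∉ A}.ncard = t := by
    intro u hu
    obtain ⟨σ, rfl⟩ := hE a u
    have hσA : σ '' A = A :=
      (hA.image σ).eq_of_inter_nonempty hdeg hA ⟨σ a, Set.mem_image_of_mem σ ha, hu⟩
    calc {y | E (σ a) y ∧ y ∉ A}.ncard = {y | E (σ a) y ∧ y ∉ σ '' A}.ncard := by rw [hσA]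
      _ = t := by rw [← σ.image_setOf_rel_notMem, Set.ncard_image_of_injective _ σ.injective]
  have hcut : (NeEdges E A).ncard = A.ncard * t := by
    rw [ncard_neEdges_eq_sum, Finset.sum_congr rfl fun u hu => hconst u (Set.mem_toFinset.1 hu),
      Finset.sum_const, smul_eq_mul, Set.ncard_eq_toFinset_card']
  have hk : 0 < A.ncard := hA.1.1.ncard_pos
  have ht : 0 < t := Nat.pos_of_mul_pos_left
    (hcut ▸ (hconn.neEdges_nonempty hA.1.1 hA.1.2.1).ncard_pos)
  calc {y | E v y}.ncard = {y | E a y}.ncard := hE.ncard_setOf_rel_eq v a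
    _ ≤ t + (A.ncard - 1) := ncard_setOf_rel_le hirr ha
    _ ≤ A.ncard * t := by
      obtain ⟨k, hk⟩ : ∃ k, A.ncard = k + 1 := ⟨_, (Nat.succ_pred_eq_of_pos hk).symm⟩
      rw [hk, Nat.add_sub_cancel]
      nlinarith
    _ = (NeEdges E A).ncard := hcut.symm

theorem IsVertexTransitive.lambdaE_eq [Nontrivial V] (hE : IsVertexTransitive E)
    (hirr : ∀ v, ¬ E v v) (hconn : SC E) (v : V) : lambdaE E = {y | E v y}.ncard := by
  obtain ⟨A, hA⟩ := exists_isEdgeAtom (E := E)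
  obtain ⟨w, hw⟩ := exists_ne v
  rw [hA.1.lambdaE_eq]
  refine le_antisymm ?_ (hE.ncard_setOf_rel_le_ncard_neEdges hirr hconn hA v)
  rw [← ncard_neEdges_singleton hirr v]
  exact hA.1.2.2 {v} (Set.singleton_nonempty v) ⟨w, hw⟩

end Transitive

section Cayley

variable {G : Type*} [Group G] {H : Subgroup G}

lemma dcoset_eq_doubleCoset (s : G) : dcoset H s = DoubleCoset.doubleCoset s H H := by
  ext
  simp [dcoset, DoubleCoset.mem_doubleCoset]

lemma mul_mul_mem_dcoset {s g h₁ h₂ : G} (hg : g ∈ dcoset H s) (hh₁ : h₁ ∈ H) (hh₂ : h₂ ∈ H) :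
    h₁ * g * h₂ ∈ dcoset H s := by
  obtain ⟨k₁, hk₁, k₂, hk₂, rfl⟩ := hg
  exact ⟨h₁ * k₁, H.mul_mem hh₁ hk₁, k₂ * h₂, H.mul_mem hk₂ hh₂, by group⟩

lemma mk_mem_image_dcoset_iff {s g : G} :
    (g : G ⧸ H) ∈ QuotientGroup.mk '' dcoset H s ↔ g ∈ dcoset H s := by
  refine ⟨fun ⟨c, hc, he⟩ => ?_, fun hg => ⟨g, hg, rfl⟩⟩
  simpa using mul_mul_mem_dcoset hc H.one_mem (QuotientGroup.eq.1 he)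

lemma cayleyRel_mk_iff (S : Set G) (a b : G) :
    cayleyRel H S a b ↔ ∃ s ∈ S, a⁻¹ * b ∈ dcoset H s := by
  refine ⟨fun ⟨s, hs, g₁, g₂, h₁, h₂, hm⟩ => ⟨s, hs, ?_⟩,
    fun ⟨s, hs, hm⟩ => ⟨s, hs, a, b, rfl, rfl, hm⟩⟩
  have := mul_mul_mem_dcoset hm (H.inv_mem (QuotientGroup.eq.1 h₁)) (QuotientGroup.eq.1 h₂)
  rwa [show (g₁⁻¹ * a)⁻¹ * (g₁⁻¹ * g₂) * (g₂⁻¹ * b) = a⁻¹ * b by group] at this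

lemma cayleyRel_smul_iff (S : Set G) (g : G) (x y : G ⧸ H) :
    cayleyRel H S (g • x) (g • y) ↔ cayleyRel H S x y := by
  induction x using QuotientGroup.induction_on
  induction y using QuotientGroup.induction_on
  simp only [MulAction.Quotient.smul_coe, smul_eq_mul, cayleyRel_mk_iff, mul_inv_rev, mul_assoc,
    inv_mul_cancel_left]

def cayleyRelIso (S : Set G) (g : G) : cayleyRel H S ≃r cayleyRel H S :=
  ⟨MulAction.toPerm g, cayleyRel_smul_iff S g _ _⟩

lemma isVertexTransitive_cayleyRel (S : Set G) : IsVertexTransitive (cayleyRel H S) := by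
  intro x y
  induction x using QuotientGroup.induction_on with | H a => ?_
  induction y using QuotientGroup.induction_on with | H b => ?_
  exact ⟨cayleyRelIso S (b * a⁻¹), show (b * a⁻¹) • (a : G ⧸ H) = b by simp⟩

lemma cayleyRel_irrefl {S : Set G} (hSH : ∀ s ∈ S, s ∉ H) (x : G ⧸ H) : ¬ cayleyRel H S x x := by
  induction x using QuotientGroup.induction_on with | H a => ?_
  rw [cayleyRel_mk_iff, inv_mul_cancel]
  rintro ⟨s, hs, k₁, hk₁, k₂, hk₂, he⟩
  have hs' : s = k₁⁻¹ * (k₁ * s * k₂) * k₂⁻¹ := by group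
  rw [← he, mul_one] at hs'
  exact hSH s hs (hs' ▸ H.mul_mem (H.inv_mem hk₁) (H.inv_mem hk₂))

lemma setOf_cayleyRel_one (S : Finset G) :
    {y | cayleyRel H S ((1 : G) : G ⧸ H) y} = ⋃ s ∈ S, QuotientGroup.mk '' dcoset H s := by
  ext y
  induction y using QuotientGroup.induction_on
  simp only [Set.mem_ofPred_eq, Set.mem_iUnion, exists_prop, cayleyRel_mk_iff, Finset.mem_coe,
    inv_one, one_mul, mk_mem_image_dcoset_iff]

lemma ncard_setOf_cayleyRel_one [Finite G] {S : Finset G}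
    (hdc : ∀ s ∈ S, ∀ t ∈ S, s ≠ t → dcoset H s ≠ dcoset H t) :
    {y | cayleyRel H S ((1 : G) : G ⧸ H) y}.ncard = ∑ s ∈ S, dval H s := by
  rw [setOf_cayleyRel_one, ← Finset.set_biUnion_coe,
    S.finite_toSet.ncard_biUnion (fun _ _ => Set.toFinite _), finsum_mem_coe_finset]
  · rfl
  · intro s hs t ht hst
    refine Set.disjoint_left.2 fun x hxs hxt => hdc s hs t ht hst ?_
    obtain ⟨g, hg, rfl⟩ := hxs
    rw [mk_mem_image_dcoset_iff] at hxt
    simp only [dcoset_eq_doubleCoset] at hg hxt ⊢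
    exact DoubleCoset.eq_of_not_disjoint (Set.not_disjoint_iff.2 ⟨g, hg, hxt⟩)

end Cayley

/-- Mader's theorem: a strongly connected Cayley coset digraph has edge
connectivity equal to its degree `d = Σ_{s∈S} |HsH/H|`. -/
theorem stmt_19 {G : Type*} [Group G] [Finite G] (H : Subgroup G) (S : Finset G)
    (hne : S.Nonempty)
    (hSH : ∀ s ∈ S, s ∉ H)
    (hdc : ∀ s ∈ S, ∀ t ∈ S, s ≠ t → dcoset H s ≠ dcoset H t)
    (hconn : SC (cayleyRel H (S : Set G))) :
    lambdaE (cayleyRel H (S : Set G)) = ∑ s ∈ S, dval H s := by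
  have := Fintype.ofFinite (G ⧸ H)
  obtain ⟨s, hs⟩ := hne
  have : Nontrivial (G ⧸ H) :=
    QuotientGroup.nontrivial_iff.2 fun hH => hSH s hs (hH ▸ Subgroup.mem_top s)
  rw [(isVertexTransitive_cayleyRel (S : Set G)).lambdaE_eq (cayleyRel_irrefl hSH) hconn
    ((1 : G) : G ⧸ H), ncard_setOf_cayleyRel_one hdc]
end
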